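/- For every integer n ≥ 1 and all elements a_1, ..., a_{2n+1}, b_1, b_2 of S_{(4,124)}, the element U = a_1a_2 + a_2a_3 + ... + a_{2n}a_{2n+1} + a_{2n+1}a_1 + b_1b_2 + b_2b_1 + b_1 is never equal to 4. -/

import Mathlib

/-- The four-element ai-semiring `S_{(4,124)}`; `e1, e2, e3, e4` stand for `1, 2, 3, 4`. -/
inductive S124 : Type
  | e1 | e2 | e3 | e4
  deriving DecidableEq

open S124

/-- Addition of `S_{(4,124)}`. -/
def S124.add : S124 → S124 → S124
  | e1, _ => e1
  | _, e1 => e1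
  | e2, e2 => e2
  | e2, e3 => e2
  | e3, e2 => e2
  | e2, e4 => e1
  | e4, e2 => e1
  | e3, e3 => e3
  | e3, e4 => e1
  | e4, e3 => e1
  | e4, e4 => e4

/-- Multiplication of `S_{(4,124)}`. -/
def S124.mul : S124 → S124 → S124
  | e1, _ => e1
  | _, e1 => e1
  | e2, e2 => e1
  | e2, e3 => e2
  | e3, e2 => e2
  | e2, e4 => e1
  | e4, e2 => e1
  | e3, e3 => e3
  | e3, e4 => e4
  | e4, e3 => e4
  | e4, e4 => e2

instance : Add S124 := ⟨S124.add⟩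
instance : Mul S124 := ⟨S124.mul⟩

/-!
In `S_{(4,124)}` a sum equals `4` only if both summands do, and a product equals `4` only if
its factors are `3` and `4` in some order. So if `U = 4`, every product `aᵢaᵢ₊₁` of the cycle
is `4`, and the `aᵢ` alternate between `3` and `4` around a cycle of odd length `2n + 1`,
which is impossible.
-/

namespace S124

lemma eq_e4_of_add_eq_e4 {x y : S124} (h : x + y = e4) : x = e4 ∧ y = e4 := by
  revert h; cases x <;> cases y <;> decide

lemma mul_self_ne_e4 (x : S124) : x * x ≠ e4 := by
  cases x <;> decide

lemma eq_of_mul_eq_e4_of_mul_eq_e4 {x y z : S124} (hxy : x * y = e4) (hyz : y * z = e4) :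
    x = z := by
  revert hxy hyz; cases x <;> cases y <;> cases z <;> decide

lemma foldr_add_eq_e4 {m : ℕ} {f : ℕ → S124} {t : S124}
    (h : (List.range m).foldr (fun i acc => f i + acc) t = e4) :
    (∀ i < m, f i = e4) ∧ t = e4 := by
  induction m generalizing t with
  | zero => simpa using h
  | succ m ih =>
    rw [List.range_succ, List.foldr_append] at h
    obtain ⟨hprefix, hlast⟩ := ih h
    obtain ⟨hm, ht⟩ := eq_e4_of_add_eq_e4 hlast
    refine ⟨fun i hi => ?_, ht⟩
    rcases Nat.lt_succ_iff_lt_or_eq.mp hi with hi | rfl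
    · exact hprefix i hi
    · exact hm

lemma apply_two_mul_eq_of_forall_mul_succ_eq_e4 {a : ℕ → S124} {m : ℕ}
    (h : ∀ i < 2 * m, a i * a (i + 1) = e4) : a (2 * m) = a 0 := by
  induction m with
  | zero => rfl
  | succ m ih =>
    calc a (2 * (m + 1)) = a (2 * m) :=
          (eq_of_mul_eq_e4_of_mul_eq_e4 (h (2 * m) (by omega)) (h (2 * m + 1) (by omega))).symm
      _ = a 0 := ih fun i hi => h i (by omega)

end S124

theorem S124_un_ne_four_general (n : ℕ) (a b : ℕ → S124)
    (U : S124)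
    (hU : U = (List.range (2 * n)).foldr (fun i acc => a (i + 1) * a (i + 2) + acc)
      (a (2 * n + 1) * a 1 + (b 1 * b 2 + (b 2 * b 1 + b 1)))) :
    U ≠ S124.e4 := by
  rw [hU]
  intro hU4
  obtain ⟨hpath, hrest⟩ := foldr_add_eq_e4 hU4
  have hcycle : a (2 * n + 1) = a 1 :=
    apply_two_mul_eq_of_forall_mul_succ_eq_e4 (a := fun i => a (i + 1)) hpath
  have hclose := (eq_e4_of_add_eq_e4 hrest).1
  rw [hcycle] at hclose
  exact mul_self_ne_e4 _ hclose

/-- For every `n ≥ 1` and all `a₁, …, a_{2n+1}, b₁, b₂` in `S_{(4,124)}`,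
the element `U = a₁a₂ + a₂a₃ + ⋯ + a_{2n}a_{2n+1} + a_{2n+1}a₁ + b₁b₂ + b₂b₁ + b₁`
is never equal to `4`. -/
theorem S124_un_ne_four (n : ℕ) (hn : 1 ≤ n) (a b : ℕ → S124)
    (U : S124)
    (hU : U = (List.range (2 * n)).foldr (fun i acc => a (i + 1) * a (i + 2) + acc)
      (a (2 * n + 1) * a 1 + (b 1 * b 2 + (b 2 * b 1 + b 1)))) :
    U ≠ S124.e4 :=
  S124_un_ne_four_general n a b U hU
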